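/- The word w_o is boundedly concise in the class of residually finite groups: there is a function f such that if G is a residually finite group in which w_o takes at most m values, then the verbal subgroup w_o(G) is finite of order at most f(m). -/

import Mathlib

open scoped commutatorElement

/-- The auxiliary word `v(x,y) = [[x^d, y^d]^d, [y^d, x^{-d}]^d]`. -/
def vWord {G : Type*} [Group G] (d : ℕ) (x y : G) : G :=
  ⁅⁅x ^ d, y ^ d⁆ ^ d, ⁅y ^ d, (x⁻¹) ^ d⁆ ^ d⁆

/-- The signs `ε_i` in Olshanskii's word, with `ε_0 = 1`. -/
def eps (i : ℕ) : ℤ :=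
  if i = 0 ∨ i % 10 = 1 ∨ i % 10 = 2 ∨ i % 10 = 3 ∨ i % 10 = 5 ∨ i % 10 = 6 then 1 else -1

/-- Olshanskii's word
`w_o(x,y) = [x,y] v(x,y)^n [x,y]^{ε_1} v(x,y)^{n+1} ⋯ [x,y]^{ε_{h-1}} v(x,y)^{n+h-1}`. -/
def wo {G : Type*} [Group G] (d n h : ℕ) (x y : G) : G :=
  ((List.range h).map fun i => ⁅x, y⁆ ^ eps i * vWord d x y ^ (n + i)).prod

/-- The set of `w_o`-values in `G`. -/
def woValues (G : Type*) [Group G] (d n h : ℕ) : Set G :=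
  {g : G | ∃ x y : G, wo d n h x y = g}

/-- A group is residually finite if every nontrivial element survives in some finite
quotient, i.e. avoids some normal subgroup of finite index. -/
def ResiduallyFinite (G : Type*) [Group G] : Prop :=
  ∀ g : G, g ≠ 1 → ∃ N : Subgroup G, N.Normal ∧ N.FiniteIndex ∧ g ∉ N

/-!
A finite group satisfying the law `w_o ≡ 1` is abelian. By induction on the order all its
proper subgroups are abelian, so by Burnside's transfer theorem it is not perfect; its
commutator subgroup is then abelian, and in a metabelian group `v(x,y) = 1`, so
`w_o(x,y) = [x,y]^(ε_0 + ⋯ + ε_{h-1}) = [x,y]`. Hence in a finite group `G` the verbal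
subgroup `w_o(G)` is `G'`.

If `w_o` takes at most `m` values in `G`, each value has at most `m` conjugates, so the
centralizer of all values, which meets `G'` inside its centre, has index at most `m^m`.
Schur's theorem then bounds `|G''|`, while `G/G''` is metabelian, so its commutator subgroup
has at most `m` commutators and is bounded by Schur's theorem again.

For residually finite `G`, any finite subset of `w_o(G)` maps injectively into `w_o(G/N)` for
some normal subgroup `N` of finite index, which reduces the bound to the finite case.
-/

open Subgroup

section Word

variable {G H : Type*} [Group G] [Group H] {d n h : ℕ}

theorem map_vWord (φ : G →* H) (x y : G) : φ (vWord d x y) = vWord d (φ x) (φ y) := by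
  simp [vWord, map_commutatorElement]

theorem map_wo (φ : G →* H) (x y : G) : φ (wo d n h x y) = wo d n h (φ x) (φ y) := by
  simp [wo, map_list_prod, Function.comp_def, map_vWord, map_commutatorElement]

theorem wo_eq_one_of_injective {φ : G →* H} (hφ : Function.Injective φ)
    (hwo : ∀ x y : H, wo d n h x y = 1) (x y : G) : wo d n h x y = 1 :=
  hφ (by rw [map_wo, hwo, map_one])

theorem image_woValues {φ : G →* H} (hφ : Function.Surjective φ) :
    φ '' woValues G d n h = woValues H d n h := by
  ext z
  constructor
  · rintro ⟨-, ⟨x, y, rfl⟩, rfl⟩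
    exact ⟨φ x, φ y, (map_wo φ x y).symm⟩
  · rintro ⟨u, v, rfl⟩
    obtain ⟨x, rfl⟩ := hφ u
    obtain ⟨y, rfl⟩ := hφ v
    exact ⟨_, ⟨x, y, rfl⟩, map_wo φ x y⟩

theorem card_woValues_le_of_surjective {φ : G →* H} (hφ : Function.Surjective φ)
    (hfin : (woValues G d n h).Finite) :
    Nat.card (woValues H d n h) ≤ Nat.card (woValues G d n h) := by
  rw [← image_woValues hφ]
  exact Nat.card_image_le hfin

theorem map_closure_woValues {φ : G →* H} (hφ : Function.Surjective φ) :
    (closure (woValues G d n h)).map φ = closure (woValues H d n h) := by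
  rw [MonoidHom.map_closure, image_woValues hφ]

theorem conj_mem_woValues (g : G) {s : G} (hs : s ∈ woValues G d n h) :
    g * s * g⁻¹ ∈ woValues G d n h := by
  rw [← image_woValues (φ := (MulAut.conj g).toMonoidHom) (MulAut.conj g).surjective]
  exact ⟨s, hs, rfl⟩

instance normal_closure_woValues : (closure (woValues G d n h)).Normal :=
  ⟨fun _ hs g => by
    rw [← map_closure_woValues (φ := (MulAut.conj g).toMonoidHom) (MulAut.conj g).surjective]
    exact mem_map_of_mem _ hs⟩

theorem closure_woValues_le_commutator : closure (woValues G d n h) ≤ commutator G := by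
  rw [closure_le]
  rintro - ⟨x, y, rfl⟩
  refine list_prod_mem fun w hw => ?_
  obtain ⟨i, -, rfl⟩ := List.mem_map.mp hw
  exact mul_mem (zpow_mem (commutator_mem_commutator (mem_top _) (mem_top _)) _)
    (pow_mem (commutator_mem_commutator (mem_top _) (mem_top _)) _)

end Word

theorem eps_add_ten {i : ℕ} (hi : i ≠ 0) : eps (i + 10) = eps i := by
  simp [eps, hi]

theorem eps_ten_mul_add (k j : ℕ) : eps (10 * k + 1 + j) = eps (1 + j) := by
  induction k with
  | zero => simp
  | succ k ih =>
    rw [show 10 * (k + 1) + 1 + j = 10 * k + 1 + j + 10 by ring, eps_add_ten (by omega), ih]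

theorem sum_map_eps_range {h : ℕ} (hh : h % 10 = 1) : ((List.range h).map eps).sum = 1 := by
  obtain ⟨k, rfl⟩ : ∃ k, h = 10 * k + 1 := ⟨h / 10, by omega⟩
  clear hh
  induction k with
  | zero => simp [eps]
  | succ k ih =>
    rw [show 10 * (k + 1) + 1 = 10 * k + 1 + 10 by ring, List.range_add, List.map_append,
      List.sum_append, ih, List.map_map]
    simp only [Function.comp_def, eps_ten_mul_add]
    decide

section Metabelian

variable {G : Type*} [Group G]

theorem list_prod_map_zpow (c : G) (l : List ℕ) (e : ℕ → ℤ) :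
    (l.map fun i => c ^ e i).prod = c ^ (l.map e).sum := by
  induction l with
  | nil => simp
  | cons a l ih => simp [ih, zpow_add]

variable [IsMulCommutative (commutator G)]

theorem vWord_eq_one (d : ℕ) (x y : G) : vWord d x y = 1 :=
  commutatorElement_eq_one_iff_mul_comm.mpr <| setLike_mul_comm (s := commutator G)
    (pow_mem (commutator_mem_commutator (mem_top _) (mem_top _)) d)
    (pow_mem (commutator_mem_commutator (mem_top _) (mem_top _)) d)

theorem wo_eq_commutatorElement {d n h : ℕ} (hh : h % 10 = 1) (x y : G) :
    wo d n h x y = ⁅x, y⁆ := by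
  simp only [wo, vWord_eq_one, one_pow, mul_one]
  rw [list_prod_map_zpow, sum_map_eps_range hh, zpow_one]

theorem woValues_eq_commutatorSet {d n h : ℕ} (hh : h % 10 = 1) :
    woValues G d n h = commutatorSet G := by
  ext g
  simp only [woValues, mem_commutatorSet_iff, wo_eq_commutatorElement hh]
  rfl

end Metabelian

theorem card_lt_card_of_ne_top {G : Type*} [Group G] [Finite G] {H : Subgroup G}
    (hH : H ≠ ⊤) : Nat.card H < Nat.card G := by
  rw [← H.card_mul_index]
  refine lt_mul_of_one_lt_right Nat.card_pos ?_
  have := H.index_ne_zero_of_finite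
  have := mt index_eq_one.mp hH
  omega

/-- A non-normal Sylow subgroup has an abelian normalizer, so Burnside's transfer theorem gives
it a normal complement; that complement contains the commutator subgroup. -/
theorem commutator_ne_top_of_forall_isMulCommutative {G : Type*} [Group G] [Finite G]
    [Nontrivial G] (hG : ∀ H : Subgroup G, H ≠ ⊤ → IsMulCommutative H) :
    commutator G ≠ ⊤ := by
  intro hperfect
  by_cases hnil : Group.IsNilpotent G
  · exact (Group.IsSolvable.commutator_lt_top_of_nontrivial G).ne hperfect
  obtain ⟨p, hp, P, hPn⟩ : ∃ p, ∃ _ : Fact p.Prime, ∃ P : Sylow p G, ¬(P : Subgroup G).Normal := by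
    by_contra! h
    exact hnil ((Group.isNilpotent_of_finite_tfae.out 0 3).mpr h)
  have hNP := hG _ (mt normalizer_eq_top_iff.mp hPn)
  have hP : normalizer (P : Subgroup G) ≤ centralizer (P : Set G) := fun g hg x hx =>
    setLike_mul_comm (s := normalizer (P : Subgroup G)) (le_normalizer hx) hg
  have hPK := MonoidHom.ker_transferSylow_isComplement' P hP
  have hker := Normal.commutator_le_of_self_sup_commutative_eq_top hPK.sup_eq_top
    (hG P fun h => hPn (h ▸ normal_top))
  rw [hperfect, top_le_iff] at hker
  rw [hker, isComplement'_top_left] at hPK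
  exact hPn (hPK ▸ normal_bot)

theorem isMulCommutative_of_forall_wo_eq_one {d n h : ℕ} (hh : h % 10 = 1) (G : Type*)
    [Group G] [Finite G] (hwo : ∀ x y : G, wo d n h x y = 1) : IsMulCommutative G := by
  induction hG : Nat.card G using Nat.strong_induction_on generalizing G with
  | _ k ih =>
  obtain hG1 | hG1 := subsingleton_or_nontrivial G
  · exact ⟨⟨fun _ _ => Subsingleton.elim _ _⟩⟩
  have hsub (H : Subgroup G) (hH : H ≠ ⊤) : IsMulCommutative H :=
    ih _ (hG ▸ card_lt_card_of_ne_top hH) H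
      (wo_eq_one_of_injective H.subtype_injective hwo) rfl
  have := hsub _ (commutator_ne_top_of_forall_isMulCommutative hsub)
  refine ⟨⟨fun x y => commutatorElement_eq_one_iff_mul_comm.mp ?_⟩⟩
  rw [← wo_eq_commutatorElement hh, hwo]

section Centralizer

variable {G : Type*} [Group G] {S : Set G}

theorem index_centralizer_singleton (s : G) :
    (centralizer {s}).index = (MulAction.orbit (ConjAct G) s).ncard := by
  have horbit := MulAction.index_stabilizer (ConjAct G) s
  rwa [ConjAct.stabilizer_eq_centralizer] at horbit

theorem orbit_conjAct_subset (hS : ∀ g : G, ∀ s ∈ S, g * s * g⁻¹ ∈ S) {s : G} (hs : s ∈ S) :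
    MulAction.orbit (ConjAct G) s ⊆ S := by
  rintro - ⟨g, rfl⟩
  exact hS _ s hs

theorem index_centralizer_singleton_le (hS : ∀ g : G, ∀ s ∈ S, g * s * g⁻¹ ∈ S) [Finite S]
    {s : G} (hs : s ∈ S) : (centralizer {s}).index ≤ Nat.card S := by
  rw [index_centralizer_singleton, ← Nat.card_coe_set_eq]
  exact Nat.card_mono S.toFinite (orbit_conjAct_subset hS hs)

theorem finiteIndex_centralizer (hS : ∀ g : G, ∀ s ∈ S, g * s * g⁻¹ ∈ S) [Finite S] :
    (centralizer S).FiniteIndex := by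
  rw [centralizer_eq_iInf, iInf_subtype']
  refine finiteIndex_iInf fun s => ⟨?_⟩
  rw [index_centralizer_singleton]
  exact ((Set.ncard_pos ((S.toFinite).subset (orbit_conjAct_subset hS s.2))).mpr
    ⟨s, MulAction.mem_orbit_self _⟩).ne'

theorem index_centralizer_le (hS : ∀ g : G, ∀ s ∈ S, g * s * g⁻¹ ∈ S) [Finite S] :
    (centralizer S).index ≤ Nat.card S ^ Nat.card S := by
  have := Fintype.ofFinite S
  rw [centralizer_eq_iInf, iInf_subtype', Nat.card_eq_fintype_card]
  refine (index_iInf_le _).trans (Finset.prod_le_pow_card _ _ _ fun s _ => ?_)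
  exact Nat.card_eq_fintype_card (α := S) ▸ index_centralizer_singleton_le hS s.2

theorem index_center_closure_le (hS : ∀ g : G, ∀ s ∈ S, g * s * g⁻¹ ∈ S) [Finite S] :
    (center (closure S)).index ≤ Nat.card S ^ Nat.card S := by
  have := finiteIndex_centralizer hS
  have hle : (centralizer S).subgroupOf (closure S) ≤ center (closure S) := fun z hz =>
    mem_center_iff.mpr fun g => by
      rw [mem_subgroupOf, ← centralizer_closure] at hz
      exact Subtype.ext (hz g g.2)
  calc (center (closure S)).index ≤ (centralizer S).relIndex (closure S) := index_antitone hle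
    _ ≤ (centralizer S).index := by
      rw [← relIndex_top_right]
      exact relIndex_le_of_le_right le_top
        (by rw [relIndex_top_right]; exact FiniteIndex.index_ne_zero)
    _ ≤ Nat.card S ^ Nat.card S := index_centralizer_le hS

end Centralizer

section Center

variable {G : Type*} [Group G]

theorem commutatorElement_mul_left_of_mem_center {a b z : G} (hz : z ∈ center G) :
    ⁅a * z, b⁆ = ⁅a, b⁆ := by
  simp only [commutatorElement_def, mul_inv_rev, mul_assoc, ← mem_center_iff.mp hz b,
    mul_inv_cancel_left]

theorem commutatorElement_mul_right_of_mem_center {a b w : G} (hw : w ∈ center G) :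
    ⁅a, b * w⁆ = ⁅a, b⁆ := by
  rw [← inv_inj, commutatorElement_inv, commutatorElement_inv,
    commutatorElement_mul_left_of_mem_center hw]

theorem card_commutatorSet_le_index_center_sq [(center G).FiniteIndex] :
    Nat.card (commutatorSet G) ≤ (center G).index ^ 2 := by
  have hsub : commutatorSet G ⊆
      Set.range fun p : (G ⧸ center G) × (G ⧸ center G) => ⁅p.1.out, p.2.out⁆ := by
    rintro - ⟨a, b, rfl⟩
    obtain ⟨z, hz⟩ := QuotientGroup.mk_out_eq_mul (center G) a
    obtain ⟨w, hw⟩ := QuotientGroup.mk_out_eq_mul (center G) b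
    refine ⟨(a, b), ?_⟩
    simp only [hz, hw, commutatorElement_mul_left_of_mem_center z.2,
      commutatorElement_mul_right_of_mem_center w.2]
  calc Nat.card (commutatorSet G) ≤ Nat.card ((G ⧸ center G) × (G ⧸ center G)) :=
        (Nat.card_mono (Set.toFinite _) hsub).trans (Finite.card_range_le _)
    _ = (center G).index ^ 2 := by rw [Nat.card_prod, sq, index_eq_card]

end Center

theorem monotone_cardCommutatorBound : Monotone cardCommutatorBound := by
  intro a b hab
  obtain rfl | ha := Nat.eq_zero_or_pos a
  · obtain rfl | hb := Nat.eq_zero_or_pos b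
    · rfl
    · simp only [cardCommutatorBound]
      exact Nat.one_le_iff_ne_zero.mpr (by positivity)
  · unfold cardCommutatorBound
    gcongr
    all_goals first | omega | exact Nat.one_le_pow _ _ (by omega)

section Quotient

variable {G : Type*} [Group G]

theorem card_eq_card_map_mul_card {H N : Subgroup G} [N.Normal] (hNH : N ≤ H) :
    Nat.card H = Nat.card (H.map (QuotientGroup.mk' N)) * Nat.card N := by
  have hmap := relIndex_ker (K := H) (QuotientGroup.mk' N)
  rw [QuotientGroup.ker_mk'] at hmap
  rw [← hmap, ← relIndex_bot_left, ← relIndex_bot_left, mul_comm,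
    relIndex_mul_relIndex ⊥ N H bot_le hNH]

theorem map_mk_commutator (N : Subgroup G) [N.Normal] :
    (commutator G).map (QuotientGroup.mk' N) = commutator (G ⧸ N) := by
  rw [map_commutator_eq, (QuotientGroup.mk' N).range_eq_top_of_surjective
    (QuotientGroup.mk'_surjective N), commutator_def]

theorem isMulCommutative_commutator_quotient_commutator_commutator :
    IsMulCommutative (commutator (G ⧸ (⁅commutator G, commutator G⁆ : Subgroup G))) := by
  rw [← commutator_self_eq_bot_iff, ← map_mk_commutator, ← map_commutator,
    QuotientGroup.map_mk'_self]

end Quotient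

def woVerbalBound (m : ℕ) : ℕ :=
  cardCommutatorBound m * cardCommutatorBound ((m ^ m) ^ 2)

section FiniteGroup

variable {d n h : ℕ} {G : Type*} [Group G] [Finite G]

theorem closure_woValues_eq_commutator (hh : h % 10 = 1) :
    closure (woValues G d n h) = commutator G := by
  refine le_antisymm closure_woValues_le_commutator
    (Normal.quotient_commutative_iff_commutator_le.mp ?_)
  refine isMulCommutative_of_forall_wo_eq_one (d := d) (n := n) hh _ fun x y => ?_
  obtain ⟨a, rfl⟩ := QuotientGroup.mk'_surjective (closure (woValues G d n h)) x
  obtain ⟨b, rfl⟩ := QuotientGroup.mk'_surjective (closure (woValues G d n h)) y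
  rw [← map_wo, QuotientGroup.mk'_apply, QuotientGroup.eq_one_iff]
  exact subset_closure ⟨a, b, rfl⟩

theorem card_commutator_commutator_le_of_card_woValues_le (hh : h % 10 = 1) {m : ℕ}
    (hm : Nat.card (woValues G d n h) ≤ m) :
    Nat.card (⁅commutator G, commutator G⁆ : Subgroup G) ≤ cardCommutatorBound ((m ^ m) ^ 2) := by
  have hmap := map_commutator_eq _ (commutator G).subtype
  rw [range_subtype] at hmap
  rw [← hmap, card_map_of_injective (subtype_injective _)]
  refine (card_commutator_le_of_finite_commutatorSet _).trans (monotone_cardCommutatorBound ?_)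
  have hcenter := index_center_closure_le (S := woValues G d n h)
    fun g _ hs => conj_mem_woValues g hs
  rw [closure_woValues_eq_commutator hh] at hcenter
  calc Nat.card (commutatorSet (commutator G)) ≤ (center (commutator G)).index ^ 2 :=
        card_commutatorSet_le_index_center_sq
    _ ≤ (m ^ m) ^ 2 := by gcongr; exact hcenter.trans (Nat.pow_self_mono hm)

theorem card_commutator_quotient_le_of_card_woValues_le (hh : h % 10 = 1) {m : ℕ}
    (hm : Nat.card (woValues G d n h) ≤ m) :
    Nat.card (commutator (G ⧸ (⁅commutator G, commutator G⁆ : Subgroup G))) ≤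
      cardCommutatorBound m := by
  have := isMulCommutative_commutator_quotient_commutator_commutator (G := G)
  refine (card_commutator_le_of_finite_commutatorSet _).trans (monotone_cardCommutatorBound ?_)
  rw [← woValues_eq_commutatorSet (d := d) (n := n) hh]
  exact (card_woValues_le_of_surjective (QuotientGroup.mk'_surjective _) (Set.toFinite _)).trans hm

theorem card_closure_woValues_le (hh : h % 10 = 1) {m : ℕ}
    (hm : Nat.card (woValues G d n h) ≤ m) :
    Nat.card (closure (woValues G d n h)) ≤ woVerbalBound m := by
  rw [closure_woValues_eq_commutator hh,
    card_eq_card_map_mul_card (commutator_le_left (commutator G) (commutator G)),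
    map_mk_commutator]
  exact Nat.mul_le_mul (card_commutator_quotient_le_of_card_woValues_le hh hm)
    (card_commutator_commutator_le_of_card_woValues_le hh hm)

end FiniteGroup

theorem Set.finite_and_ncard_le_of_forall_finset {α : Type*} {S : Set α} {B : ℕ}
    (hS : ∀ t : Finset α, ↑t ⊆ S → t.card ≤ B) : S.Finite ∧ S.ncard ≤ B := by
  have hfin : S.Finite := by
    by_contra hinf
    obtain ⟨t, hts, hcard⟩ := Set.Infinite.exists_subset_card_eq hinf (B + 1)
    have := hS t hts
    omega
  refine ⟨hfin, ?_⟩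
  rw [Set.ncard_eq_toFinset_card S hfin]
  exact hS _ (by simp)

namespace ResiduallyFinite

variable {G : Type*} [Group G]

theorem exists_normal_finiteIndex_forall_notMem (hG : ResiduallyFinite G) (s : Finset G)
    (hs : ∀ g ∈ s, g ≠ 1) : ∃ N : Subgroup G, N.Normal ∧ N.FiniteIndex ∧ ∀ g ∈ s, g ∉ N := by
  classical
  induction s using Finset.induction_on with
  | empty => exact ⟨⊤, inferInstance, inferInstance, by simp⟩
  | insert a t _ ih =>
    obtain ⟨N, hN, hNfi, htN⟩ := ih fun g hg => hs g (Finset.mem_insert_of_mem hg)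
    obtain ⟨M, hM, hMfi, haM⟩ := hG a (hs a (Finset.mem_insert_self a t))
    refine ⟨M ⊓ N, inferInstance, inferInstance, fun g hg hgMN => ?_⟩
    obtain rfl | hgt := Finset.mem_insert.mp hg
    · exact haM hgMN.1
    · exact htN g hgt hgMN.2

theorem exists_normal_finiteIndex_injOn (hG : ResiduallyFinite G) (s : Finset G) :
    ∃ N : Subgroup G, N.Normal ∧ N.FiniteIndex ∧ Set.InjOn ((↑) : G → G ⧸ N) s := by
  classical
  obtain ⟨N, hN, hNfi, hsN⟩ := hG.exists_normal_finiteIndex_forall_notMem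
    (s.offDiag.image fun p => p.1⁻¹ * p.2) (by
      simp only [Finset.mem_image, Finset.mem_offDiag]
      rintro - ⟨⟨a, b⟩, ⟨-, -, hab⟩, rfl⟩
      exact mt inv_mul_eq_one.mp hab)
  refine ⟨N, hN, hNfi, fun a ha b hb hab => ?_⟩
  by_contra hne
  exact hsN (a⁻¹ * b) (Finset.mem_image.mpr ⟨(a, b), Finset.mem_offDiag.mpr ⟨ha, hb, hne⟩, rfl⟩)
    (QuotientGroup.eq.mp hab)

end ResiduallyFinite

theorem stmt12_general (d n h : ℕ) (hh : h % 10 = 1) :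
    ∃ f : ℕ → ℕ, ∀ (m : ℕ) (G : Type*) [Group G], ResiduallyFinite G →
      (woValues G d n h).Finite → Nat.card (woValues G d n h) ≤ m →
      Finite ↥(Subgroup.closure (woValues G d n h)) ∧
        Nat.card ↥(Subgroup.closure (woValues G d n h)) ≤ f m := by
  refine ⟨woVerbalBound, fun m G _ hG hfin hm => ?_⟩
  suffices hs : ∀ s : Finset G, ↑s ⊆ (closure (woValues G d n h) : Set G) →
      s.card ≤ woVerbalBound m by
    obtain ⟨hfinite, hcard⟩ := Set.finite_and_ncard_le_of_forall_finset hs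
    exact ⟨hfinite.to_subtype, Nat.card_coe_set_eq _ ▸ hcard⟩
  intro s hs
  obtain ⟨N, hN, hNfi, hinj⟩ := hG.exists_normal_finiteIndex_injOn s
  have hmap : (↑) '' (s : Set G) ⊆ (closure (woValues (G ⧸ N) d n h) : Set (G ⧸ N)) := by
    rw [← map_closure_woValues (QuotientGroup.mk'_surjective N), coe_map]
    exact Set.image_mono hs
  calc s.card = ((↑) '' (s : Set G) : Set (G ⧸ N)).ncard := by
        rw [hinj.ncard_image, Set.ncard_coe_finset]
    _ ≤ Nat.card (closure (woValues (G ⧸ N) d n h)) :=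
        (Set.ncard_le_ncard hmap (Set.toFinite _)).trans_eq (Nat.card_coe_set_eq _).symm
    _ ≤ woVerbalBound m := card_closure_woValues_le hh
        ((card_woValues_le_of_surjective (QuotientGroup.mk'_surjective N) hfin).trans hm)

/-- The word `w_o` is boundedly concise in residually finite groups: there
is `f : ℕ → ℕ` such that if a residually finite group `G` has at most `m` `w_o`-values,
then the verbal subgroup `w_o(G)` is finite of order at most `f m`. -/
theorem stmt12 (d n h : ℕ) (hd : 0 < d) (hn : 0 < n) (hh : h % 10 = 1)
    (hh' : 50000 < h) :
    ∃ f : ℕ → ℕ, ∀ (m : ℕ) (G : Type*) [Group G], ResiduallyFinite G →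
      (woValues G d n h).Finite → Nat.card (woValues G d n h) ≤ m →
      Finite ↥(Subgroup.closure (woValues G d n h)) ∧
        Nat.card ↥(Subgroup.closure (woValues G d n h)) ≤ f m :=
  stmt12_general d n h hh
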